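/- arXiv:1906.01190 — 3 statements merged into one kernel-verified Lean document; each statement's English description precedes it below -/
import Mathlib

section
/- Let Γ be a group acting properly discontinuously by homeomorphisms on a topological space X, let π ≤ Γ be a subgroup, let C ⊆ X be compact, and set A := π·C. Assume that: (i) χ : X → ℝ is π-invariant, i.e. χ(h·x) = χ(x) for all h ∈ π and x ∈ X; (ii) χ is constant on each connected component of X ∖ A; (iii) every compact subset of X is contained in a compact connected subset of X. Then for every compact subset K ⊆ X, the quantity sup_{x₁,x₂ ∈ K} |χ(γ⁻¹·x₁) − χ(γ⁻¹·x₂)| depends only on the coset γπ ∈ Γ/π, and there are only finitely many cosets γπ ∈ Γ/π for which this supremum is nonzero; equivalently, for all but finitely many cosets γπ ∈ Γ/π the function x ↦ χ(γ⁻¹·x) is constant on K. -/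
open Pointwise

/-!
If `γ • A` meets a compact connected `K' ⊇ K`, then some `γh` with `h ∈ π` moves `C` into `K'`,
and proper discontinuity leaves only finitely many such cosets `γπ`. Otherwise `γ⁻¹ • K'` is a
connected subset of `X ∖ A`, so lies in one component, where `χ` is constant; hence
`x ↦ χ (γ⁻¹ • x)` is constant on `K`. The coset independence is the `π`-invariance of `χ`.
-/

theorem apply_inv_smul_eq_of_mk_eq {Γ X α : Type*} [Group Γ] [MulAction Γ X]
    {π : Subgroup Γ} {χ : X → α} (hinv : ∀ h ∈ π, ∀ x, χ (h • x) = χ x)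
    {γ₁ γ₂ : Γ} (hq : (γ₁ : Γ ⧸ π) = γ₂) (x : X) :
    χ (γ₁⁻¹ • x) = χ (γ₂⁻¹ • x) := by
  simpa [smul_smul, mul_assoc] using (hinv _ (QuotientGroup.eq.mp hq) (γ₂⁻¹ • x))

theorem IsPreconnected.apply_eq_of_subset {X α : Type*} [TopologicalSpace X] {U T : Set X}
    {f : X → α} (hf : ∀ x ∈ U, ∀ y ∈ _root_.connectedComponentIn U x, f y = f x)
    (hT : IsPreconnected T) (hTU : T ⊆ U) {x y : X} (hx : x ∈ T) (hy : y ∈ T) :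
    f x = f y :=
  (hf x (hTU hx) y (hT.subset_connectedComponentIn hx hTU hy)).symm

theorem finite_cosets_smul_orbit_meets {Γ X : Type*} [Group Γ] [MulAction Γ X]
    (π : Subgroup Γ) {C L : Set X} (hfin : {γ : Γ | ((γ • C) ∩ L).Nonempty}.Finite) :
    {z : Γ ⧸ π | ∃ γ : Γ, (γ : Γ ⧸ π) = z ∧ ∃ h ∈ π, ∃ c ∈ C, γ • h • c ∈ L}.Finite := by
  refine (hfin.image (QuotientGroup.mk : Γ → Γ ⧸ π)).subset ?_
  rintro _ ⟨γ, rfl, h, hh, c, hc, hL⟩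
  refine ⟨γ * h, ⟨(γ * h) • c, Set.smul_mem_smul_set hc, by rwa [mul_smul]⟩, ?_⟩
  exact QuotientGroup.mk_mul_of_mem γ hh

/-- (Lemma 3.3 of the paper, abstract form.)
Let `Γ` act properly discontinuously by homeomorphisms on a topological space `X`,
let `π ≤ Γ`, let `C ⊆ X` be compact and `A := π · C`.  Assume
(i) `χ : X → ℝ` is `π`-invariant,
(ii) `χ` is constant on each connected component of `X \ A`, and
(iii) every compact subset of `X` is contained in a compact connected subset.
Then for every compact `K ⊆ X` the quantity
`sup_{x₁,x₂ ∈ K} |χ(γ⁻¹ • x₁) − χ(γ⁻¹ • x₂)|` depends only on the coset `γπ ∈ Γ/π`,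
and for all but finitely many cosets `γπ` the function `x ↦ χ(γ⁻¹ • x)` is constant
on `K` (i.e. the supremum above is nonzero for only finitely many cosets). -/
theorem finitelyManyCosets_nonconstant
    {Γ X : Type*} [Group Γ] [TopologicalSpace X] [MulAction Γ X]
    (hcont : ∀ γ : Γ, Continuous fun x : X => γ • x)
    (hproper : ∀ K L : Set X, IsCompact K → IsCompact L →
      {γ : Γ | ((γ • K) ∩ L).Nonempty}.Finite)
    (π : Subgroup Γ) (C : Set X) (hC : IsCompact C)
    (A : Set X) (hA : A = {x : X | ∃ h ∈ π, ∃ c ∈ C, x = h • c})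
    (χ : X → ℝ)
    (hinv : ∀ (h : Γ), h ∈ π → ∀ x : X, χ (h • x) = χ x)
    (hconst : ∀ x ∈ Aᶜ, ∀ y ∈ connectedComponentIn Aᶜ x, χ y = χ x)
    (hconn : ∀ K : Set X, IsCompact K → ∃ K' : Set X,
      IsCompact K' ∧ IsConnected K' ∧ K ⊆ K') :
    ∀ K : Set X, IsCompact K →
      (∀ γ₁ γ₂ : Γ, (QuotientGroup.mk γ₁ : Γ ⧸ π) = QuotientGroup.mk γ₂ →
        sSup {r : ℝ | ∃ x₁ ∈ K, ∃ x₂ ∈ K, r = |χ (γ₁⁻¹ • x₁) - χ (γ₁⁻¹ • x₂)|} =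
        sSup {r : ℝ | ∃ x₁ ∈ K, ∃ x₂ ∈ K, r = |χ (γ₂⁻¹ • x₁) - χ (γ₂⁻¹ • x₂)|}) ∧
      {z : Γ ⧸ π | ∃ γ : Γ, (QuotientGroup.mk γ : Γ ⧸ π) = z ∧
        ¬ (∀ x₁ ∈ K, ∀ x₂ ∈ K, χ (γ⁻¹ • x₁) = χ (γ⁻¹ • x₂))}.Finite := by
  intro K hK
  refine ⟨fun γ₁ γ₂ hq => ?_, ?_⟩
  · simp only [apply_inv_smul_eq_of_mk_eq hinv hq]
  obtain ⟨K', hK'c, hK'conn, hKK'⟩ := hconn K hK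
  refine (finite_cosets_smul_orbit_meets π (hproper C K' hC hK'c)).subset ?_
  rintro _ ⟨γ, rfl, hnonconst⟩
  refine ⟨γ, rfl, ?_⟩
  by_contra! hmiss
  have hdisj : (γ⁻¹ • ·) '' K' ⊆ Aᶜ := by
    rintro _ ⟨w, hw, rfl⟩ hwA
    obtain ⟨h, hh, c, hc, hwc⟩ := hA ▸ hwA
    exact hmiss h hh c hc (by rwa [← hwc, smul_inv_smul])
  have hpre : IsPreconnected ((γ⁻¹ • ·) '' K') :=
    hK'conn.isPreconnected.image _ (hcont γ⁻¹).continuousOn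
  exact hnonconst fun x₁ h₁ x₂ h₂ =>
    hpre.apply_eq_of_subset hconst hdisj ⟨x₁, hKK' h₁, rfl⟩ ⟨x₂, hKK' h₂, rfl⟩
end

section
/- Let Γ be a group acting properly discontinuously by homeomorphisms on a topological space X, let π ≤ Γ be a subgroup, let C ⊆ X be compact, set A := π·C, and fix a base point x₀ ∈ X. Let χ : X → [−1,1] be π-invariant (χ(h·x) = χ(x) for all h ∈ π, x ∈ X) and satisfy χ(x) ∈ {−1, +1} for every x ∉ A. Then the assignment χ_{Γ/π}(γπ) := χ(γ⁻¹·x₀) gives a well-defined function χ_{Γ/π} : Γ/π → [−1,1], and the set {z ∈ Γ/π : χ_{Γ/π}(z)² ≠ 1} is finite; in particular the function z ↦ χ_{Γ/π}(z)² − 1 on the discrete space Γ/π has finite support and hence vanishes at infinity (it lies in C₀(Γ/π)). -/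
open Pointwise

/-- (From Definition 3.5 of the paper: `χ_{Γ/π}² = 1` modulo `C₀(Γ/π)`.)
Let `Γ` act properly discontinuously by homeomorphisms on a topological space `X`,
let `π ≤ Γ`, let `C ⊆ X` be compact, `A := π · C`, and fix a base point `x₀ ∈ X`.
Let `χ : X → [−1,1]` be `π`-invariant with `χ(x) ∈ {−1, +1}` for every `x ∉ A`.
Then `χ_{Γ/π}(γπ) := χ(γ⁻¹ • x₀)` is a well-defined function on `Γ/π` with values
in `[−1,1]`, the set of cosets `z` with `χ_{Γ/π}(z)² ≠ 1` is finite, and the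
function `z ↦ χ_{Γ/π}(z)² − 1` has finite support, hence vanishes at infinity on
the discrete space `Γ/π` (i.e. tends to `0` along the cofinite filter). -/
theorem cosetCutoff_sq_eq_one_mod_c0
    {Γ X : Type*} [Group Γ] [TopologicalSpace X] [MulAction Γ X]
    (hcont : ∀ γ : Γ, Continuous fun x : X => γ • x)
    (hproper : ∀ K L : Set X, IsCompact K → IsCompact L →
      {γ : Γ | ((γ • K) ∩ L).Nonempty}.Finite)
    (π : Subgroup Γ) (C : Set X) (hC : IsCompact C)
    (A : Set X) (hA : A = {x : X | ∃ h ∈ π, ∃ c ∈ C, x = h • c})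
    (x₀ : X) (χ : X → ℝ)
    (hrange : ∀ x : X, χ x ∈ Set.Icc (-1 : ℝ) 1)
    (hinv : ∀ (h : Γ), h ∈ π → ∀ x : X, χ (h • x) = χ x)
    (hout : ∀ x : X, x ∉ A → χ x = -1 ∨ χ x = 1) :
    (∀ γ₁ γ₂ : Γ, (QuotientGroup.mk γ₁ : Γ ⧸ π) = QuotientGroup.mk γ₂ →
      χ (γ₁⁻¹ • x₀) = χ (γ₂⁻¹ • x₀)) ∧
    ∃ F : Γ ⧸ π → ℝ,
      (∀ γ : Γ, F (QuotientGroup.mk γ) = χ (γ⁻¹ • x₀)) ∧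
      (∀ z : Γ ⧸ π, F z ∈ Set.Icc (-1 : ℝ) 1) ∧
      {z : Γ ⧸ π | F z ^ 2 ≠ 1}.Finite ∧
      (Function.support fun z : Γ ⧸ π => F z ^ 2 - 1).Finite ∧
      Filter.Tendsto (fun z : Γ ⧸ π => F z ^ 2 - 1) Filter.cofinite (nhds 0) := by
  -- well-definedness
  have hwd : ∀ γ₁ γ₂ : Γ, (QuotientGroup.mk γ₁ : Γ ⧸ π) = QuotientGroup.mk γ₂ →
      χ (γ₁⁻¹ • x₀) = χ (γ₂⁻¹ • x₀) := by
    intro γ₁ γ₂ h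
    have hmem : γ₁⁻¹ * γ₂ ∈ π := (QuotientGroup.eq (s := π)).mp h
    have : χ ((γ₁⁻¹ * γ₂) • (γ₂⁻¹ • x₀)) = χ (γ₂⁻¹ • x₀) :=
      hinv _ hmem _
    rwa [smul_smul, mul_assoc, mul_inv_cancel, mul_one] at this
  refine ⟨hwd, ?_⟩
  -- define F by lifting
  let F : Γ ⧸ π → ℝ := Quotient.lift (fun γ : Γ => χ (γ⁻¹ • x₀))
    (fun γ₁ γ₂ h => hwd γ₁ γ₂ (Quotient.sound h))
  have hFmk : ∀ γ : Γ, F (QuotientGroup.mk γ) = χ (γ⁻¹ • x₀) := fun γ => rfl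
  refine ⟨F, hFmk, fun z => ?_, ?_, ?_, ?_⟩
  · induction z using QuotientGroup.induction_on with
    | H γ => exact hrange _
  · -- finiteness of the bad set
    have hS : {γ : Γ | ((γ • C) ∩ {x₀}).Nonempty}.Finite :=
      hproper C {x₀} hC isCompact_singleton
    have hsub : {z : Γ ⧸ π | F z ^ 2 ≠ 1} ⊆
        (QuotientGroup.mk '' {γ : Γ | ((γ • C) ∩ {x₀}).Nonempty}) := by
      rintro z hz
      induction z using QuotientGroup.induction_on with
      | H γ =>
        simp only [Set.mem_setOf_eq, hFmk] at hz
        have hin : γ⁻¹ • x₀ ∈ A := by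
          by_contra hnot
          rcases hout _ hnot with h | h <;> rw [h] at hz <;> simp at hz
        rw [hA] at hin
        obtain ⟨h, hh, c, hc, hxc⟩ := hin
        refine ⟨γ * h, ⟨x₀, ?_⟩, ?_⟩
        · constructor
          · exact ⟨c, hc, by show (γ * h) • c = x₀; rw [← smul_smul, ← hxc, smul_inv_smul]⟩
          · rfl
        · rw [eq_comm, QuotientGroup.eq]
          simpa using hh
    exact (hS.image _).subset hsub
  · -- support finiteness
    have hS : {γ : Γ | ((γ • C) ∩ {x₀}).Nonempty}.Finite :=
      hproper C {x₀} hC isCompact_singleton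
    have : (Function.support fun z : Γ ⧸ π => F z ^ 2 - 1) =
        {z : Γ ⧸ π | F z ^ 2 ≠ 1} := by
      ext z; simp [Function.mem_support, sub_eq_zero]
    rw [this]
    -- repeat the argument (reuse via a sub-lemma would duplicate; just redo)
    have hsub : {z : Γ ⧸ π | F z ^ 2 ≠ 1} ⊆
        (QuotientGroup.mk '' {γ : Γ | ((γ • C) ∩ {x₀}).Nonempty}) := by
      rintro z hz
      induction z using QuotientGroup.induction_on with
      | H γ =>
        simp only [Set.mem_setOf_eq, hFmk] at hz
        have hin : γ⁻¹ • x₀ ∈ A := by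
          by_contra hnot
          rcases hout _ hnot with h | h <;> rw [h] at hz <;> simp at hz
        rw [hA] at hin
        obtain ⟨h, hh, c, hc, hxc⟩ := hin
        refine ⟨γ * h, ⟨x₀, ?_⟩, ?_⟩
        · constructor
          · exact ⟨c, hc, by show (γ * h) • c = x₀; rw [← smul_smul, ← hxc, smul_inv_smul]⟩
          · rfl
        · rw [eq_comm, QuotientGroup.eq]
          simpa using hh
    exact (hS.image _).subset hsub
  · -- tendsto 0
    have hS : {γ : Γ | ((γ • C) ∩ {x₀}).Nonempty}.Finite :=
      hproper C {x₀} hC isCompact_singleton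
    have hsub : {z : Γ ⧸ π | F z ^ 2 ≠ 1} ⊆
        (QuotientGroup.mk '' {γ : Γ | ((γ • C) ∩ {x₀}).Nonempty}) := by
      rintro z hz
      induction z using QuotientGroup.induction_on with
      | H γ =>
        simp only [Set.mem_setOf_eq, hFmk] at hz
        have hin : γ⁻¹ • x₀ ∈ A := by
          by_contra hnot
          rcases hout _ hnot with h | h <;> rw [h] at hz <;> simp at hz
        rw [hA] at hin
        obtain ⟨h, hh, c, hc, hxc⟩ := hin
        refine ⟨γ * h, ⟨x₀, ?_⟩, ?_⟩
        · constructor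
          · exact ⟨c, hc, by show (γ * h) • c = x₀; rw [← smul_smul, ← hxc, smul_inv_smul]⟩
          · rfl
        · rw [eq_comm, QuotientGroup.eq]
          simpa using hh
    have hfin : {z : Γ ⧸ π | F z ^ 2 - 1 ≠ 0}.Finite := by
      refine ((hS.image (QuotientGroup.mk : Γ → Γ ⧸ π)).subset ?_)
      intro z hz
      exact hsub (by simpa [sub_eq_zero] using hz)
    have hev : ∀ᶠ z in (Filter.cofinite : Filter (Γ ⧸ π)), F z ^ 2 - 1 = 0 := by
      rw [Filter.eventually_cofinite]
      simpa using hfin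
    exact Filter.Tendsto.congr' (by filter_upwards [hev] with z h using h.symm)
      tendsto_const_nhds
end

section
/- Let Γ be a group acting properly discontinuously by homeomorphisms on a topological space X, let π ≤ Γ be a subgroup, let C ⊆ X be compact, set A := π·C, and fix a base point x₀ ∈ X. Assume that: (i) χ : X → ℝ is π-invariant; (ii) χ is constant on each connected component of X ∖ A; (iii) every compact subset of X is contained in a compact connected subset of X. Define χ_{Γ/π} : Γ/π → ℝ by χ_{Γ/π}(γπ) := χ(γ⁻¹·x₀) (well defined by π-invariance of χ). Then for every fixed g ∈ Γ the function Γ/π → ℝ, z ↦ χ_{Γ/π}(z) − χ_{Γ/π}(g⁻¹·z), has finite support, where Γ acts on Γ/π by left translation g⁻¹·(γπ) = (g⁻¹γ)π. In particular, χ_{Γ/π} is invariant under the Γ-action modulo finitely supported functions, hence modulo C₀(Γ/π). -/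
open Pointwise

/-- (From Definition 3.5 of the paper: `χ_{Γ/π}` is `Γ`-invariant
modulo `C₀(Γ/π)`.)
Let `Γ` act properly discontinuously by homeomorphisms on a topological space `X`,
let `π ≤ Γ`, let `C ⊆ X` be compact, `A := π · C`, and fix a base point `x₀ ∈ X`.
Assume (i) `χ : X → ℝ` is `π`-invariant, (ii) `χ` is constant on each connected
component of `X \ A`, and (iii) every compact subset of `X` is contained in a
compact connected subset.  Define `χ_{Γ/π} : Γ/π → ℝ` by
`χ_{Γ/π}(γπ) := χ(γ⁻¹ • x₀)` (well defined by `π`-invariance).  Then for every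
fixed `g ∈ Γ` the function `z ↦ χ_{Γ/π}(z) − χ_{Γ/π}(g⁻¹ • z)` on `Γ/π` has finite
support, where `Γ` acts on `Γ/π` by left translation. -/
theorem cosetCutoff_invariant_mod_c0
    {Γ X : Type*} [Group Γ] [TopologicalSpace X] [MulAction Γ X]
    (hcont : ∀ γ : Γ, Continuous fun x : X => γ • x)
    (hproper : ∀ K L : Set X, IsCompact K → IsCompact L →
      {γ : Γ | ((γ • K) ∩ L).Nonempty}.Finite)
    (π : Subgroup Γ) (C : Set X) (hC : IsCompact C)
    (A : Set X) (hA : A = {x : X | ∃ h ∈ π, ∃ c ∈ C, x = h • c})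
    (x₀ : X) (χ : X → ℝ)
    (hinv : ∀ (h : Γ), h ∈ π → ∀ x : X, χ (h • x) = χ x)
    (hconst : ∀ x ∈ Aᶜ, ∀ y ∈ connectedComponentIn Aᶜ x, χ y = χ x)
    (hconn : ∀ K : Set X, IsCompact K → ∃ K' : Set X,
      IsCompact K' ∧ IsConnected K' ∧ K ⊆ K') :
    (∀ γ₁ γ₂ : Γ, (QuotientGroup.mk γ₁ : Γ ⧸ π) = QuotientGroup.mk γ₂ →
      χ (γ₁⁻¹ • x₀) = χ (γ₂⁻¹ • x₀)) ∧
    ∃ F : Γ ⧸ π → ℝ,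
      (∀ γ : Γ, F (QuotientGroup.mk γ) = χ (γ⁻¹ • x₀)) ∧
      ∀ g : Γ, (Function.support fun z : Γ ⧸ π => F z - F (g⁻¹ • z)).Finite := by

  have hwd : ∀ γ₁ γ₂ : Γ, (QuotientGroup.mk γ₁ : Γ ⧸ π) = QuotientGroup.mk γ₂ →
      χ (γ₁⁻¹ • x₀) = χ (γ₂⁻¹ • x₀) := by
    intro γ₁ γ₂ h
    rw [QuotientGroup.eq] at h
    have := hinv _ h (γ₂⁻¹ • x₀)
    rw [smul_smul] at this
    simpa [mul_assoc] using this
  refine ⟨hwd, ?_⟩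
  refine ⟨fun z => Quotient.liftOn' z (fun γ => χ (γ⁻¹ • x₀))
      (fun a b hab => hwd a b (Quotient.sound' hab)), fun γ => rfl, ?_⟩
  intro g
  obtain ⟨K', hK'c, hK'conn, hK'sub⟩ :=
    hconn {x₀, g • x₀} ((Set.finite_singleton _).insert _).isCompact
  have hS : {γ : Γ | ((γ • C) ∩ K').Nonempty}.Finite := hproper C K' hC hK'c
  apply Set.Finite.subset (hS.image (QuotientGroup.mk : Γ → Γ ⧸ π))
  intro z hz
  induction z using QuotientGroup.induction_on with
  | H γ =>
  have hgz : (g⁻¹ • (QuotientGroup.mk γ : Γ ⧸ π)) = QuotientGroup.mk (g⁻¹ * γ) := rfl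
  have hne : χ (γ⁻¹ • x₀) ≠ χ ((g⁻¹ * γ)⁻¹ • x₀) := by
    intro h
    apply hz
    simp only [hgz]
    show χ (γ⁻¹ • x₀) - χ ((g⁻¹ * γ)⁻¹ • x₀) = 0
    rw [h, sub_self]
  have hy : (g⁻¹ * γ)⁻¹ • x₀ = γ⁻¹ • (g • x₀) := by
    rw [mul_inv_rev, inv_inv, mul_smul]
  have hmeet : ((γ⁻¹ • K') ∩ A).Nonempty := by
    by_contra hdis
    rw [Set.not_nonempty_iff_eq_empty, ← Set.disjoint_iff_inter_eq_empty] at hdis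
    have hsub : γ⁻¹ • K' ⊆ Aᶜ := Set.disjoint_left.mp hdis
    have hconn' : IsConnected (γ⁻¹ • K') := by
      have heq : γ⁻¹ • K' = (fun x : X => γ⁻¹ • x) '' K' := rfl
      rw [heq]
      exact hK'conn.image _ (hcont γ⁻¹).continuousOn
    have hx : γ⁻¹ • x₀ ∈ γ⁻¹ • K' :=
      Set.smul_mem_smul_set (hK'sub (Set.mem_insert _ _))
    have hysub : γ⁻¹ • (g • x₀) ∈ γ⁻¹ • K' :=
      Set.smul_mem_smul_set (hK'sub (Set.mem_insert_of_mem _ rfl))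
    have hxc : γ⁻¹ • x₀ ∈ Aᶜ := hsub hx
    have hycomp : γ⁻¹ • (g • x₀) ∈ connectedComponentIn Aᶜ (γ⁻¹ • x₀) :=
      hconn'.isPreconnected.subset_connectedComponentIn hx hsub hysub
    exact hne (by rw [hy]; exact (hconst _ hxc _ hycomp).symm)
  obtain ⟨w, hwK, hwA⟩ := hmeet
  rw [hA] at hwA
  obtain ⟨h, hh, c, hc, rfl⟩ := hwA
  refine ⟨γ * h, ⟨(γ * h) • c, Set.smul_mem_smul_set hc, ?_⟩, ?_⟩
  · have hmem : γ • (h • c) ∈ K' := by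
      have h2 := Set.smul_mem_smul_set (a := γ) hwK
      rwa [smul_smul, mul_inv_cancel, one_smul] at h2
    rwa [← mul_smul] at hmem
  · exact QuotientGroup.mk_mul_of_mem γ hh
end
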